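/- arXiv:1407.3011 — 2 statements merged into one kernel-verified Lean document; each statement's English description precedes it below -/
import Mathlib

section
/- Let W¹, W² : ℝ² → ℝ be smooth functions with ∂_y W¹ < 0 and ∂_x W² < 0 everywhere, satisfying the system ∂_x∂_y W¹ = −(∂_y W¹)(∂_x W² + e^{W¹}) and ∂_x∂_y W² = −(∂_x W²)(e^{W²} + ∂_y W¹). Define V¹ := log( 2(∂_y W¹)(∂_x W²) ) and V² := 2W² − 2W¹ + log( (∂_y W¹)/(∂_x W²) ). Then V¹ is a solution of the Liouville equation ∂_x∂_y V¹ = exp(V¹) and V² is a solution of the wave equation ∂_x∂_y V² = 0. -/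
noncomputable section

open Real

/-- Partial derivative with respect to the first variable. -/
def pdx (f : ℝ → ℝ → ℝ) (x y : ℝ) : ℝ := deriv (fun t => f t y) x

/-- Partial derivative with respect to the second variable. -/
def pdy (f : ℝ → ℝ → ℝ) (x y : ℝ) : ℝ := deriv (fun t => f x t) y

/-- Directional derivative in the first coordinate, as a function on the plane. -/
def Dx (G : ℝ × ℝ → ℝ) : ℝ × ℝ → ℝ := fun p => fderiv ℝ G p (1, 0)

/-- Directional derivative in the second coordinate, as a function on the plane. -/
def Dy (G : ℝ × ℝ → ℝ) : ℝ × ℝ → ℝ := fun p => fderiv ℝ G p (0, 1)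

lemma sliceDerivX {G : ℝ × ℝ → ℝ} {x y : ℝ} (h : DifferentiableAt ℝ G (x, y)) :
    HasDerivAt (fun t => G (t, y)) (Dx G (x, y)) x :=
  h.hasFDerivAt.comp_hasDerivAt x (HasDerivAt.prodMk (hasDerivAt_id x) (hasDerivAt_const x y))

lemma sliceDerivY {G : ℝ × ℝ → ℝ} {x y : ℝ} (h : DifferentiableAt ℝ G (x, y)) :
    HasDerivAt (fun t => G (x, t)) (Dy G (x, y)) y :=
  h.hasFDerivAt.comp_hasDerivAt y (HasDerivAt.prodMk (hasDerivAt_const y x) (hasDerivAt_id y))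

lemma contDiff_Dx {G : ℝ × ℝ → ℝ} (hG : ContDiff ℝ (⊤ : ℕ∞) G) : ContDiff ℝ (⊤ : ℕ∞) (Dx G) :=
  (hG.fderiv_right (by simp)).clm_apply contDiff_const

lemma contDiff_Dy {G : ℝ × ℝ → ℝ} (hG : ContDiff ℝ (⊤ : ℕ∞) G) : ContDiff ℝ (⊤ : ℕ∞) (Dy G) :=
  (hG.fderiv_right (by simp)).clm_apply contDiff_const

lemma hdX {G : ℝ × ℝ → ℝ} (hG : ContDiff ℝ (⊤ : ℕ∞) G) (x y : ℝ) :
    HasDerivAt (fun t => G (t, y)) (Dx G (x, y)) x :=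
  sliceDerivX ((hG.differentiable (by simp)) (x, y))

lemma hdY {G : ℝ × ℝ → ℝ} (hG : ContDiff ℝ (⊤ : ℕ∞) G) (x y : ℝ) :
    HasDerivAt (fun t => G (x, t)) (Dy G (x, y)) y :=
  sliceDerivY ((hG.differentiable (by simp)) (x, y))

lemma fderiv_x_eq {G : ℝ × ℝ → ℝ} {x y c : ℝ} (h : DifferentiableAt ℝ G (x, y))
    (hc : HasDerivAt (fun t => G (t, y)) c x) : Dx G (x, y) = c :=
  (sliceDerivX h).unique hc

lemma fderiv_y_eq {G : ℝ × ℝ → ℝ} {x y c : ℝ} (h : DifferentiableAt ℝ G (x, y))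
    (hc : HasDerivAt (fun t => G (x, t)) c y) : Dy G (x, y) = c :=
  (sliceDerivY h).unique hc

lemma swap_fderiv {G : ℝ × ℝ → ℝ} (hG : ContDiff ℝ (⊤ : ℕ∞) G) (p v w : ℝ × ℝ) :
    fderiv ℝ (fun q => fderiv ℝ G q v) p w = fderiv ℝ (fun q => fderiv ℝ G q w) p v := by
  have hd : DifferentiableAt ℝ (fderiv ℝ G) p :=
    ((hG.fderiv_right (m := (⊤ : ℕ∞)) (by simp)).differentiable (by simp)).differentiableAt
  have h1 : ∀ u z : ℝ × ℝ, fderiv ℝ (fun q => fderiv ℝ G q u) p z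
      = fderiv ℝ (fderiv ℝ G) p z u := by
    intro u z
    rw [fderiv_clm_apply hd (differentiableAt_const u)]
    simp
  rw [h1, h1]
  exact (hG.contDiffAt.isSymmSndFDerivAt (by simp [minSmoothness_of_isRCLikeNormedField]; exact WithTop.coe_le_coe.mpr (le_top : (2 : ℕ∞) ≤ ⊤))) w v

lemma Dswap {G : ℝ × ℝ → ℝ} (hG : ContDiff ℝ (⊤ : ℕ∞) G) (p : ℝ × ℝ) :
    Dx (Dy G) p = Dy (Dx G) p :=
  swap_fderiv hG p (0, 1) (1, 0)

lemma pdy_eq_fderiv {W : ℝ → ℝ → ℝ} (hW : ContDiff ℝ (⊤ : ℕ∞) (fun p : ℝ × ℝ => W p.1 p.2))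
    (x y : ℝ) : pdy W x y = Dy (fun p : ℝ × ℝ => W p.1 p.2) (x, y) := by
  simpa [pdy] using ((sliceDerivY ((hW.differentiable (by simp)) (x, y))).deriv)

lemma pdx_eq_fderiv {W : ℝ → ℝ → ℝ} (hW : ContDiff ℝ (⊤ : ℕ∞) (fun p : ℝ × ℝ => W p.1 p.2))
    (x y : ℝ) : pdx W x y = Dx (fun p : ℝ × ℝ => W p.1 p.2) (x, y) := by
  simpa [pdx] using ((sliceDerivX ((hW.differentiable (by simp)) (x, y))).deriv)

lemma pdxpdy_eq {W : ℝ → ℝ → ℝ} (hW : ContDiff ℝ (⊤ : ℕ∞) (fun p : ℝ × ℝ => W p.1 p.2))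
    (x y : ℝ) : pdx (pdy W) x y = Dx (Dy (fun p : ℝ × ℝ => W p.1 p.2)) (x, y) := by
  have hfun : (fun t => pdy W t y) = fun t => Dy (fun p : ℝ × ℝ => W p.1 p.2) (t, y) :=
    funext fun t => pdy_eq_fderiv hW t y
  show deriv (fun t => pdy W t y) x = _
  rw [hfun]
  exact (hdX (contDiff_Dy hW) x y).deriv

lemma key (F₁ F₂ : ℝ × ℝ → ℝ) (hF₁ : ContDiff ℝ (⊤ : ℕ∞) F₁) (hF₂ : ContDiff ℝ (⊤ : ℕ∞) F₂)
    (hAneg : ∀ p : ℝ × ℝ, Dy F₁ p < 0) (hBneg : ∀ p : ℝ × ℝ, Dx F₂ p < 0)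
    (E1 : ∀ p : ℝ × ℝ, Dx (Dy F₁) p = -Dy F₁ p * (Dx F₂ p + exp (F₁ p)))
    (E2 : ∀ p : ℝ × ℝ, Dy (Dx F₂) p = -Dx F₂ p * (exp (F₂ p) + Dy F₁ p)) :
    (∀ x y : ℝ, pdx (pdy (fun x y => log (2 * (Dy F₁ (x, y) * Dx F₂ (x, y))))) x y
        = 2 * (Dy F₁ (x, y) * Dx F₂ (x, y))) ∧
    (∀ x y : ℝ, pdx (pdy (fun x y => 2 * F₂ (x, y) - 2 * F₁ (x, y)
        + log (Dy F₁ (x, y) / Dx F₂ (x, y)))) x y = 0) := by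
  have hA : ContDiff ℝ (⊤ : ℕ∞) (Dy F₁) := contDiff_Dy hF₁
  have hB : ContDiff ℝ (⊤ : ℕ∞) (Dx F₂) := contDiff_Dx hF₂
  have hAy : ContDiff ℝ (⊤ : ℕ∞) (Dy (Dy F₁)) := contDiff_Dy hA
  have hBy : ContDiff ℝ (⊤ : ℕ∞) (Dy (Dx F₂)) := contDiff_Dy hB
  have hF₂y : ContDiff ℝ (⊤ : ℕ∞) (Dy F₂) := contDiff_Dy hF₂
  -- the key third-derivative computations
  have hAyx : ∀ x y : ℝ, Dx (Dy (Dy F₁)) (x, y)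
      = -Dy (Dy F₁) (x, y) * (Dx F₂ (x, y) + exp (F₁ (x, y)))
        + -Dy F₁ (x, y) * (Dy (Dx F₂) (x, y) + exp (F₁ (x, y)) * Dy F₁ (x, y)) := by
    intro x y
    rw [Dswap hA (x, y),
      show Dx (Dy F₁) = fun q => -Dy F₁ q * (Dx F₂ q + exp (F₁ q)) from funext E1]
    exact fderiv_y_eq (((hA.neg.mul (hB.add hF₁.exp)).differentiable (by simp)) (x, y))
      ((hdY hA x y).neg.mul ((hdY hB x y).add ((hdY hF₁ x y).exp)))
  have hByx : ∀ x y : ℝ, Dx (Dy (Dx F₂)) (x, y)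
      = -Dx (Dx F₂) (x, y) * (exp (F₂ (x, y)) + Dy F₁ (x, y))
        + -Dx F₂ (x, y) * (exp (F₂ (x, y)) * Dx F₂ (x, y) + Dx (Dy F₁) (x, y)) := by
    intro x y
    rw [show Dy (Dx F₂) = fun q => -Dx F₂ q * (exp (F₂ q) + Dy F₁ q) from funext E2]
    exact fderiv_x_eq (((hB.neg.mul (hF₂.exp.add hA)).differentiable (by simp)) (x, y))
      ((hdX hB x y).neg.mul (((hdX hF₂ x y).exp).add (hdX hA x y)))
  constructor
  · -- Liouville part
    have h1 : ∀ x y : ℝ,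
        pdy (fun x y => log (2 * (Dy F₁ (x, y) * Dx F₂ (x, y)))) x y
          = Dy (Dy F₁) (x, y) / Dy F₁ (x, y) - (exp (F₂ (x, y)) + Dy F₁ (x, y)) := by
      intro x y
      have a0 : Dy F₁ (x, y) ≠ 0 := (hAneg (x, y)).ne
      have b0 : Dx F₂ (x, y) ≠ 0 := (hBneg (x, y)).ne
      have hpos : (0 : ℝ) < 2 * (Dy F₁ (x, y) * Dx F₂ (x, y)) := by
        nlinarith [hAneg (x, y), hBneg (x, y)]
      have hd : HasDerivAt (fun t => log (2 * (Dy F₁ (x, t) * Dx F₂ (x, t))))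
          ((2 * (Dy (Dy F₁) (x, y) * Dx F₂ (x, y) + Dy F₁ (x, y) * Dy (Dx F₂) (x, y)))
            / (2 * (Dy F₁ (x, y) * Dx F₂ (x, y)))) y :=
        (((hdY hA x y).mul (hdY hB x y)).const_mul 2).log (ne_of_gt hpos)
      show deriv (fun t => log (2 * (Dy F₁ (x, t) * Dx F₂ (x, t)))) y = _
      rw [hd.deriv, E2 (x, y)]
      field_simp
      ring
    intro x y
    have a0 : Dy F₁ (x, y) ≠ 0 := (hAneg (x, y)).ne
    have b0 : Dx F₂ (x, y) ≠ 0 := (hBneg (x, y)).ne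
    have hfun : (fun t => pdy (fun x y => log (2 * (Dy F₁ (x, y) * Dx F₂ (x, y)))) t y)
        = fun t => Dy (Dy F₁) (t, y) / Dy F₁ (t, y) - (exp (F₂ (t, y)) + Dy F₁ (t, y)) :=
      funext fun t => h1 t y
    have hd : HasDerivAt
        (fun t => Dy (Dy F₁) (t, y) / Dy F₁ (t, y) - (exp (F₂ (t, y)) + Dy F₁ (t, y)))
        ((Dx (Dy (Dy F₁)) (x, y) * Dy F₁ (x, y) - Dy (Dy F₁) (x, y) * Dx (Dy F₁) (x, y))
            / Dy F₁ (x, y) ^ 2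
          - (exp (F₂ (x, y)) * Dx F₂ (x, y) + Dx (Dy F₁) (x, y))) x :=
      (((hdX hAy x y).div (hdX hA x y) a0).sub (((hdX hF₂ x y).exp).add (hdX hA x y)))
    show deriv (fun t => pdy (fun x y => log (2 * (Dy F₁ (x, y) * Dx F₂ (x, y)))) t y) x = _
    rw [hfun, hd.deriv, hAyx x y, E1 (x, y), E2 (x, y)]
    field_simp
    ring
  · -- wave part
    have h2 : ∀ x y : ℝ,
        pdy (fun x y => 2 * F₂ (x, y) - 2 * F₁ (x, y)
            + log (Dy F₁ (x, y) / Dx F₂ (x, y))) x y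
          = 2 * Dy F₂ (x, y) - 2 * Dy F₁ (x, y)
            + (Dy (Dy F₁) (x, y) / Dy F₁ (x, y) - Dy (Dx F₂) (x, y) / Dx F₂ (x, y)) := by
      intro x y
      have a0 : Dy F₁ (x, y) ≠ 0 := (hAneg (x, y)).ne
      have b0 : Dx F₂ (x, y) ≠ 0 := (hBneg (x, y)).ne
      have hd : HasDerivAt
          (fun t => 2 * F₂ (x, t) - 2 * F₁ (x, t) + log (Dy F₁ (x, t) / Dx F₂ (x, t)))
          (2 * Dy F₂ (x, y) - 2 * Dy F₁ (x, y)
            + ((Dy (Dy F₁) (x, y) * Dx F₂ (x, y) - Dy F₁ (x, y) * Dy (Dx F₂) (x, y))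
                / Dx F₂ (x, y) ^ 2) / (Dy F₁ (x, y) / Dx F₂ (x, y))) y :=
        ((((hdY hF₂ x y).const_mul 2).sub ((hdY hF₁ x y).const_mul 2)).add
          (((hdY hA x y).div (hdY hB x y) b0).log (div_ne_zero a0 b0)))
      show deriv
          (fun t => 2 * F₂ (x, t) - 2 * F₁ (x, t) + log (Dy F₁ (x, t) / Dx F₂ (x, t))) y = _
      rw [hd.deriv]
      field_simp
    intro x y
    have a0 : Dy F₁ (x, y) ≠ 0 := (hAneg (x, y)).ne
    have b0 : Dx F₂ (x, y) ≠ 0 := (hBneg (x, y)).ne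
    have hfun : (fun t => pdy (fun x y => 2 * F₂ (x, y) - 2 * F₁ (x, y)
            + log (Dy F₁ (x, y) / Dx F₂ (x, y))) t y)
        = fun t => 2 * Dy F₂ (t, y) - 2 * Dy F₁ (t, y)
            + (Dy (Dy F₁) (t, y) / Dy F₁ (t, y) - Dy (Dx F₂) (t, y) / Dx F₂ (t, y)) :=
      funext fun t => h2 t y
    have hd : HasDerivAt
        (fun t => 2 * Dy F₂ (t, y) - 2 * Dy F₁ (t, y)
            + (Dy (Dy F₁) (t, y) / Dy F₁ (t, y) - Dy (Dx F₂) (t, y) / Dx F₂ (t, y)))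
        (2 * Dx (Dy F₂) (x, y) - 2 * Dx (Dy F₁) (x, y)
          + ((Dx (Dy (Dy F₁)) (x, y) * Dy F₁ (x, y) - Dy (Dy F₁) (x, y) * Dx (Dy F₁) (x, y))
                / Dy F₁ (x, y) ^ 2
            - (Dx (Dy (Dx F₂)) (x, y) * Dx F₂ (x, y) - Dy (Dx F₂) (x, y) * Dx (Dx F₂) (x, y))
                / Dx F₂ (x, y) ^ 2)) x :=
      ((((hdX hF₂y x y).const_mul 2).sub ((hdX hA x y).const_mul 2)).add
        (((hdX hAy x y).div (hdX hA x y) a0).sub ((hdX hBy x y).div (hdX hB x y) b0)))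
    show deriv (fun t => pdy (fun x y => 2 * F₂ (x, y) - 2 * F₁ (x, y)
        + log (Dy F₁ (x, y) / Dx F₂ (x, y))) t y) x = _
    rw [hfun, hd.deriv, Dswap hF₂ (x, y), hAyx x y, hByx x y, E1 (x, y), E2 (x, y)]
    field_simp
    ring

/-- The Bäcklund system for the A₂ Toda system projects onto the decoupled Liouville–wave
system: if `W¹, W²` with `W¹ᵧ < 0`, `W²ₓ < 0` satisfy `W¹ₓᵧ = −W¹ᵧ(W²ₓ + e^{W¹})` and
`W²ₓᵧ = −W²ₓ(e^{W²} + W¹ᵧ)`, then `V¹ = log(2W¹ᵧW²ₓ)` solves the Liouville equation and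
`V² = 2W² − 2W¹ + log(W¹ᵧ/W²ₓ)` solves the wave equation. -/
theorem toda_backlund_liouville_wave (W₁ W₂ : ℝ → ℝ → ℝ)
    (hW₁ : ContDiff ℝ (⊤ : ℕ∞) (fun p : ℝ × ℝ => W₁ p.1 p.2))
    (hW₂ : ContDiff ℝ (⊤ : ℕ∞) (fun p : ℝ × ℝ => W₂ p.1 p.2))
    (hW₁y : ∀ x y : ℝ, pdy W₁ x y < 0) (hW₂x : ∀ x y : ℝ, pdx W₂ x y < 0)
    (heq₁ : ∀ x y : ℝ, pdx (pdy W₁) x y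
        = -(pdy W₁ x y) * (pdx W₂ x y + Real.exp (W₁ x y)))
    (heq₂ : ∀ x y : ℝ, pdx (pdy W₂) x y
        = -(pdx W₂ x y) * (Real.exp (W₂ x y) + pdy W₁ x y))
    (V₁ V₂ : ℝ → ℝ → ℝ)
    (hV₁ : V₁ = fun x y => Real.log (2 * (pdy W₁ x y * pdx W₂ x y)))
    (hV₂ : V₂ = fun x y => 2 * W₂ x y - 2 * W₁ x y + Real.log (pdy W₁ x y / pdx W₂ x y)) :
    (∀ x y : ℝ, pdx (pdy V₁) x y = Real.exp (V₁ x y)) ∧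
    (∀ x y : ℝ, pdx (pdy V₂) x y = 0) := by
  set F₁ : ℝ × ℝ → ℝ := fun p : ℝ × ℝ => W₁ p.1 p.2 with hF₁def
  set F₂ : ℝ × ℝ → ℝ := fun p : ℝ × ℝ => W₂ p.1 p.2 with hF₂def
  have hAneg : ∀ p : ℝ × ℝ, Dy F₁ p < 0 := by
    rintro ⟨x, y⟩
    rw [← pdy_eq_fderiv hW₁ x y]
    exact hW₁y x y
  have hBneg : ∀ p : ℝ × ℝ, Dx F₂ p < 0 := by
    rintro ⟨x, y⟩
    rw [← pdx_eq_fderiv hW₂ x y]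
    exact hW₂x x y
  have E1 : ∀ p : ℝ × ℝ, Dx (Dy F₁) p = -Dy F₁ p * (Dx F₂ p + exp (F₁ p)) := by
    rintro ⟨x, y⟩
    have h := heq₁ x y
    rw [pdxpdy_eq hW₁ x y, pdy_eq_fderiv hW₁ x y, pdx_eq_fderiv hW₂ x y] at h
    exact h
  have E2 : ∀ p : ℝ × ℝ, Dy (Dx F₂) p = -Dx F₂ p * (exp (F₂ p) + Dy F₁ p) := by
    rintro ⟨x, y⟩
    have h := heq₂ x y
    rw [pdxpdy_eq hW₂ x y, pdy_eq_fderiv hW₁ x y, pdx_eq_fderiv hW₂ x y] at h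
    rw [← Dswap hW₂ (x, y)]
    exact h
  obtain ⟨k1, k2⟩ := key F₁ F₂ hW₁ hW₂ hAneg hBneg E1 E2
  have hVfun₁ : V₁ = fun x y => log (2 * (Dy F₁ (x, y) * Dx F₂ (x, y))) := by
    rw [hV₁]
    funext a b
    rw [pdy_eq_fderiv hW₁ a b, pdx_eq_fderiv hW₂ a b]
  have hVfun₂ : V₂ = fun x y => 2 * F₂ (x, y) - 2 * F₁ (x, y)
      + log (Dy F₁ (x, y) / Dx F₂ (x, y)) := by
    rw [hV₂]
    funext a b
    rw [pdy_eq_fderiv hW₁ a b, pdx_eq_fderiv hW₂ a b]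
  constructor
  · intro x y
    have hexp : exp (V₁ x y) = 2 * (Dy F₁ (x, y) * Dx F₂ (x, y)) := by
      rw [hVfun₁]
      exact exp_log (by nlinarith [hAneg (x, y), hBneg (x, y)])
    rw [hexp, hVfun₁]
    exact k1 x y
  · intro x y
    rw [hVfun₂]
    exact k2 x y
end
end

section
/- Let W¹, W² : ℝ² → ℝ be smooth functions with ∂_x W² ≠ 0, satisfying the system ∂_x∂_y W¹ = −(∂_y W¹)(∂_x W² + e^{W¹}) and ∂_x∂_y W² = −(∂_x W²)(e^{W²} + ∂_y W¹). Then the third-order expression W²_{xxx}/W²_x + e^{W¹}( W²_{xx}/W²_x − W¹_x − W²_x ) − (3/2)(W²_{xx}/W²_x)² − (1/2)e^{2W¹} − (1/2)(W²_x)² is an intermediate integral: its partial derivative with respect to y vanishes identically. -/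
noncomputable section

open Real

section helpers
variable {f : ℝ → ℝ → ℝ}

lemma hasDerivAt_slice_x (hf : ContDiff ℝ (⊤ : ℕ∞) (fun p : ℝ × ℝ => f p.1 p.2)) (x y : ℝ) :
    HasDerivAt (fun t => f t y) (fderiv ℝ (fun p : ℝ × ℝ => f p.1 p.2) (x, y) (1, 0)) x := by
  have h := (hf.differentiable (by simp) (x, y)).hasFDerivAt
  have h2 : HasDerivAt (fun t : ℝ => ((t, y) : ℝ × ℝ)) ((1 : ℝ), (0 : ℝ)) x :=
    (hasDerivAt_id x).prodMk (hasDerivAt_const x y)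
  exact h.comp_hasDerivAt x h2

lemma hasDerivAt_slice_y (hf : ContDiff ℝ (⊤ : ℕ∞) (fun p : ℝ × ℝ => f p.1 p.2)) (x y : ℝ) :
    HasDerivAt (fun t => f x t) (fderiv ℝ (fun p : ℝ × ℝ => f p.1 p.2) (x, y) (0, 1)) y := by
  have h := (hf.differentiable (by simp) (x, y)).hasFDerivAt
  have h2 : HasDerivAt (fun t : ℝ => ((x, t) : ℝ × ℝ)) ((0 : ℝ), (1 : ℝ)) y :=
    (hasDerivAt_const y x).prodMk (hasDerivAt_id y)
  exact h.comp_hasDerivAt y h2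

lemma pdx_eq (hf : ContDiff ℝ (⊤ : ℕ∞) (fun p : ℝ × ℝ => f p.1 p.2)) (x y : ℝ) :
    pdx f x y = fderiv ℝ (fun p : ℝ × ℝ => f p.1 p.2) (x, y) (1, 0) :=
  (hasDerivAt_slice_x hf x y).deriv

lemma pdy_eq (hf : ContDiff ℝ (⊤ : ℕ∞) (fun p : ℝ × ℝ => f p.1 p.2)) (x y : ℝ) :
    pdy f x y = fderiv ℝ (fun p : ℝ × ℝ => f p.1 p.2) (x, y) (0, 1) :=
  (hasDerivAt_slice_y hf x y).deriv

lemma hasDerivAt_pdx (hf : ContDiff ℝ (⊤ : ℕ∞) (fun p : ℝ × ℝ => f p.1 p.2)) (x y : ℝ) :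
    HasDerivAt (fun t => f t y) (pdx f x y) x := by
  rw [pdx_eq hf]; exact hasDerivAt_slice_x hf x y

lemma hasDerivAt_pdy (hf : ContDiff ℝ (⊤ : ℕ∞) (fun p : ℝ × ℝ => f p.1 p.2)) (x y : ℝ) :
    HasDerivAt (fun t => f x t) (pdy f x y) y := by
  rw [pdy_eq hf]; exact hasDerivAt_slice_y hf x y

lemma contDiff_pdx (hf : ContDiff ℝ (⊤ : ℕ∞) (fun p : ℝ × ℝ => f p.1 p.2)) :
    ContDiff ℝ (⊤ : ℕ∞) (fun p : ℝ × ℝ => pdx f p.1 p.2) := by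
  have he : (fun p : ℝ × ℝ => pdx f p.1 p.2)
      = fun p : ℝ × ℝ => fderiv ℝ (fun p : ℝ × ℝ => f p.1 p.2) p (1, 0) := by
    funext p; simpa using pdx_eq hf p.1 p.2
  rw [he]
  exact (hf.fderiv_right (by simp)).clm_apply contDiff_const

lemma contDiff_pdy (hf : ContDiff ℝ (⊤ : ℕ∞) (fun p : ℝ × ℝ => f p.1 p.2)) :
    ContDiff ℝ (⊤ : ℕ∞) (fun p : ℝ × ℝ => pdy f p.1 p.2) := by
  have he : (fun p : ℝ × ℝ => pdy f p.1 p.2)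
      = fun p : ℝ × ℝ => fderiv ℝ (fun p : ℝ × ℝ => f p.1 p.2) p (0, 1) := by
    funext p; simpa using pdy_eq hf p.1 p.2
  rw [he]
  exact (hf.fderiv_right (by simp)).clm_apply contDiff_const

lemma pdy_pdx_comm (hf : ContDiff ℝ (⊤ : ℕ∞) (fun p : ℝ × ℝ => f p.1 p.2)) (x y : ℝ) :
    pdy (pdx f) x y = pdx (pdy f) x y := by
  set F : ℝ × ℝ → ℝ := fun p => f p.1 p.2 with hF
  have hF1 : ContDiff ℝ (⊤ : ℕ∞) (fderiv ℝ F) := hf.fderiv_right (by simp)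
  have hsymm := second_derivative_symmetric
    (f' := fderiv ℝ F) (f'' := fderiv ℝ (fderiv ℝ F) (x, y))
    (fun p => (hf.differentiable (by simp) p).hasFDerivAt)
    ((hF1.differentiable (by simp) (x, y)).hasFDerivAt)
  have e1 : (fun p : ℝ × ℝ => pdx f p.1 p.2) = fun p => fderiv ℝ F p (1, 0) := by
    funext p; simpa using pdx_eq hf p.1 p.2
  have e2 : (fun p : ℝ × ℝ => pdy f p.1 p.2) = fun p => fderiv ℝ F p (0, 1) := by
    funext p; simpa using pdy_eq hf p.1 p.2
  have hd1 := ((hF1.differentiable (by simp) (x, y)).hasFDerivAt).clm_apply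
    (hasFDerivAt_const (((1 : ℝ), (0 : ℝ)) : ℝ × ℝ) (x, y))
  have hd2 := ((hF1.differentiable (by simp) (x, y)).hasFDerivAt).clm_apply
    (hasFDerivAt_const (((0 : ℝ), (1 : ℝ)) : ℝ × ℝ) (x, y))
  have h1 : pdy (pdx f) x y = fderiv ℝ (fderiv ℝ F) (x, y) (0, 1) (1, 0) := by
    rw [pdy_eq (contDiff_pdx hf) x y, e1, hd1.fderiv]
    simp
  have h2 : pdx (pdy f) x y = fderiv ℝ (fderiv ℝ F) (x, y) (1, 0) (0, 1) := by
    rw [pdx_eq (contDiff_pdy hf) x y, e2, hd2.fderiv]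
    simp
  rw [h1, h2, hsymm]

end helpers

/-- A third-order intermediate integral for the Bäcklund system of the A₂ Toda system:
if `W¹, W²` with `W²ₓ ≠ 0` satisfy `W¹ₓᵧ = −W¹ᵧ(W²ₓ + e^{W¹})`,
`W²ₓᵧ = −W²ₓ(e^{W²} + W¹ᵧ)`, then `∂ᵧ` of
`W²ₓₓₓ/W²ₓ + e^{W¹}(W²ₓₓ/W²ₓ − W¹ₓ − W²ₓ) − (3/2)(W²ₓₓ/W²ₓ)² − ½e^{2W¹} − ½(W²ₓ)²`
vanishes identically. -/
theorem toda_backlund_third_order_integral (W₁ W₂ : ℝ → ℝ → ℝ)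
    (hW₁ : ContDiff ℝ (⊤ : ℕ∞) (fun p : ℝ × ℝ => W₁ p.1 p.2))
    (hW₂ : ContDiff ℝ (⊤ : ℕ∞) (fun p : ℝ × ℝ => W₂ p.1 p.2))
    (hW₂x : ∀ x y : ℝ, pdx W₂ x y ≠ 0)
    (heq₁ : ∀ x y : ℝ, pdx (pdy W₁) x y
        = -(pdy W₁ x y) * (pdx W₂ x y + Real.exp (W₁ x y)))
    (heq₂ : ∀ x y : ℝ, pdx (pdy W₂) x y
        = -(pdx W₂ x y) * (Real.exp (W₂ x y) + pdy W₁ x y)) :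
    ∀ x y : ℝ, pdy (fun x y =>
        pdx (pdx (pdx W₂)) x y / pdx W₂ x y
          + Real.exp (W₁ x y) * (pdx (pdx W₂) x y / pdx W₂ x y - pdx W₁ x y - pdx W₂ x y)
          - (3 / 2) * (pdx (pdx W₂) x y / pdx W₂ x y) ^ 2
          - (1 / 2) * Real.exp (2 * W₁ x y)
          - (1 / 2) * (pdx W₂ x y) ^ 2) x y = 0 := by
  have hA : ContDiff ℝ (⊤ : ℕ∞) (fun p : ℝ × ℝ => pdx W₂ p.1 p.2) := contDiff_pdx hW₂
  have hB : ContDiff ℝ (⊤ : ℕ∞) (fun p : ℝ × ℝ => pdx (pdx W₂) p.1 p.2) := contDiff_pdx hA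
  have hC : ContDiff ℝ (⊤ : ℕ∞) (fun p : ℝ × ℝ => pdx (pdx (pdx W₂)) p.1 p.2) := contDiff_pdx hB
  have hU : ContDiff ℝ (⊤ : ℕ∞) (fun p : ℝ × ℝ => pdy W₁ p.1 p.2) := contDiff_pdy hW₁
  have hP : ContDiff ℝ (⊤ : ℕ∞) (fun p : ℝ × ℝ => pdx W₁ p.1 p.2) := contDiff_pdx hW₁
  -- first-order consequence: pdy of pdx W₂
  have hAy : ∀ s t : ℝ, pdy (pdx W₂) s t
      = -(pdx W₂ s t) * (Real.exp (W₂ s t) + pdy W₁ s t) :=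
    fun s t => (pdy_pdx_comm hW₂ s t).trans (heq₂ s t)
  -- pdy of pdx (pdx W₂)
  have hBy : ∀ s t : ℝ, pdy (pdx (pdx W₂)) s t
      = -(pdx (pdx W₂) s t) * (Real.exp (W₂ s t) + pdy W₁ s t)
        - (pdx W₂ s t) ^ 2 * Real.exp (W₂ s t)
        + pdx W₂ s t * pdy W₁ s t * (pdx W₂ s t + Real.exp (W₁ s t)) := by
    intro s t
    have h0 := pdy_pdx_comm hA s t
    have hfun : (fun r => pdy (pdx W₂) r t)
        = fun r => -(pdx W₂ r t) * (Real.exp (W₂ r t) + pdy W₁ r t) :=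
      funext fun r => hAy r t
    have hUx : HasDerivAt (fun r => pdy W₁ r t)
        (-(pdy W₁ s t) * (pdx W₂ s t + Real.exp (W₁ s t))) s := by
      have := hasDerivAt_pdx hU s t
      rwa [heq₁ s t] at this
    have hd := (hasDerivAt_pdx hA s t).neg.mul
      ((hasDerivAt_pdx hW₂ s t).exp.add hUx)
    simp only [Pi.add_apply, Pi.sub_apply, Pi.mul_apply, Pi.neg_apply, Pi.pow_apply] at hd
    have hd' := hfun.symm ▸ (show HasDerivAt
      (fun r => -(pdx W₂ r t) * (Real.exp (W₂ r t) + pdy W₁ r t)) _ s from hd)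
    rw [h0]
    exact hd'.deriv.trans (by ring)
  -- pdy of pdx (pdx (pdx W₂))
  have hCy : ∀ s t : ℝ, pdy (pdx (pdx (pdx W₂))) s t
      = -(pdx (pdx (pdx W₂)) s t) * (Real.exp (W₂ s t) + pdy W₁ s t)
        - pdx (pdx W₂) s t * (Real.exp (W₂ s t) * pdx W₂ s t
            + (-(pdy W₁ s t) * (pdx W₂ s t + Real.exp (W₁ s t))))
        - 2 * pdx W₂ s t * pdx (pdx W₂) s t * Real.exp (W₂ s t)
        - (pdx W₂ s t) ^ 3 * Real.exp (W₂ s t)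
        + pdx (pdx W₂) s t * pdy W₁ s t * (pdx W₂ s t + Real.exp (W₁ s t))
        + pdx W₂ s t * (-(pdy W₁ s t) * (pdx W₂ s t + Real.exp (W₁ s t)))
            * (pdx W₂ s t + Real.exp (W₁ s t))
        + pdx W₂ s t * pdy W₁ s t
            * (pdx (pdx W₂) s t + Real.exp (W₁ s t) * pdx W₁ s t) := by
    intro s t
    have h0 := pdy_pdx_comm hB s t
    have hfun : (fun r => pdy (pdx (pdx W₂)) r t)
        = fun r => -(pdx (pdx W₂) r t) * (Real.exp (W₂ r t) + pdy W₁ r t)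
            - (pdx W₂ r t) ^ 2 * Real.exp (W₂ r t)
            + pdx W₂ r t * pdy W₁ r t * (pdx W₂ r t + Real.exp (W₁ r t)) :=
      funext fun r => hBy r t
    have hUx : HasDerivAt (fun r => pdy W₁ r t)
        (-(pdy W₁ s t) * (pdx W₂ s t + Real.exp (W₁ s t))) s := by
      have := hasDerivAt_pdx hU s t
      rwa [heq₁ s t] at this
    have hd := (((hasDerivAt_pdx hB s t).neg.mul
        ((hasDerivAt_pdx hW₂ s t).exp.add hUx)).sub
        (((hasDerivAt_pdx hA s t).pow 2).mul (hasDerivAt_pdx hW₂ s t).exp)).add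
        ((((hasDerivAt_pdx hA s t).mul hUx).mul
          ((hasDerivAt_pdx hA s t).add (hasDerivAt_pdx hW₁ s t).exp)))
    simp only [Pi.add_apply, Pi.sub_apply, Pi.mul_apply, Pi.neg_apply, Pi.pow_apply] at hd
    have hd' := hfun.symm ▸ (show HasDerivAt
      (fun r => -(pdx (pdx W₂) r t) * (Real.exp (W₂ r t) + pdy W₁ r t)
              - (pdx W₂ r t) ^ 2 * Real.exp (W₂ r t)
              + pdx W₂ r t * pdy W₁ r t * (pdx W₂ r t + Real.exp (W₁ r t))) _ s from hd)
    rw [h0]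
    exact hd'.deriv.trans (by ring)
  have hPy : ∀ s t : ℝ, pdy (pdx W₁) s t
      = -(pdy W₁ s t) * (pdx W₂ s t + Real.exp (W₁ s t)) :=
    fun s t => (pdy_pdx_comm hW₁ s t).trans (heq₁ s t)
  intro x y
  have hne := hW₂x x y
  have hCt := hasDerivAt_pdy hC x y
  have hBt := hasDerivAt_pdy hB x y
  have hAt := hasDerivAt_pdy hA x y
  have hPt := hasDerivAt_pdy hP x y
  have hW1t := hasDerivAt_pdy hW₁ x y
  have hE := ((((hCt.div hAt hne).add
      (hW1t.exp.mul (((hBt.div hAt hne).sub hPt).sub hAt))).sub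
      (((hBt.div hAt hne).pow 2).const_mul (3 / 2))).sub
      (((hW1t.const_mul 2).exp).const_mul (1 / 2))).sub
      ((hAt.pow 2).const_mul (1 / 2))
  simp only [pdy] at hE ⊢
  erw [hE.deriv]
  simp only [Pi.add_apply, Pi.sub_apply, Pi.mul_apply, Pi.div_apply, Pi.neg_apply, Pi.pow_apply]
  have eA := hAy x y
  have eB := hBy x y
  have eC := hCy x y
  have eP := hPy x y
  simp only [pdy] at eA eB eC eP
  rw [eA, eB, eC, eP, two_mul (W₁ x y), Real.exp_add]
  simp only [show (2:ℕ) - 1 = 1 from rfl, pow_one]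
  field_simp
  ring
end
end
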